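/- arXiv:1801.09021 — 2 statements merged into one kernel-verified Lean document; each statement's English description precedes it below -/
import Mathlib

section
/- For any categorical distribution θ on a finite nonempty set X and any α₀ ∈ ℝ, the function α ↦ H(T(θ,α)||θ) is differentiable at α₀ with derivative −V(T(θ,α₀)||θ). -/
open Real BigOperators
open scoped Classical

variable {X : Type*}

/-- A categorical distribution on a finite set: positive everywhere and sums to 1. -/
def IsCatDist [Fintype X] (θ : X → ℝ) : Prop :=
  (∀ x, 0 < θ x) ∧ ∑ x, θ x = 1

/-- The tilt of order `α` of a categorical distribution. -/
noncomputable def tilt [Fintype X] (θ : X → ℝ) (α : ℝ) : X → ℝ :=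
  fun x => θ x ^ α / ∑ y, θ y ^ α

/-- Shannon entropy (natural log). -/
noncomputable def shannonEntropy [Fintype X] (ρ : X → ℝ) : ℝ :=
  ∑ x, ρ x * Real.log (1 / ρ x)

/-- Cross entropy `H(ρ‖θ)`. -/
noncomputable def crossEntropy [Fintype X] (ρ θ : X → ℝ) : ℝ :=
  ∑ x, ρ x * Real.log (1 / θ x)

/-- Relative entropy (KL divergence) `D(ρ‖θ)`. -/
noncomputable def relEntropy [Fintype X] (ρ θ : X → ℝ) : ℝ :=
  ∑ x, ρ x * Real.log (ρ x / θ x)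

/-- Rényi entropy of order `α`. -/
noncomputable def renyiEntropy [Fintype X] (θ : X → ℝ) (α : ℝ) : ℝ :=
  (1 / (1 - α)) * Real.log (∑ x, θ x ^ α)

/-- Varentropy. -/
noncomputable def varentropy [Fintype X] (ρ : X → ℝ) : ℝ :=
  ∑ x, ρ x * (Real.log (1 / ρ x) - shannonEntropy ρ) ^ 2

/-- Cross varentropy. -/
noncomputable def crossVarentropy [Fintype X] (ρ θ : X → ℝ) : ℝ :=
  ∑ x, ρ x * (Real.log (1 / θ x) - crossEntropy ρ θ) ^ 2

/-- Probability of an `n`-string under the i.i.d. extension of `θ`. -/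
noncomputable def strProb (θ : X → ℝ) {n : ℕ} (x : Fin n → X) : ℝ := ∏ i, θ (x i)

/-- Probability of a set of `n`-strings. -/
noncomputable def setProb [Fintype X] (θ : X → ℝ) {n : ℕ} (S : Finset (Fin n → X)) : ℝ :=
  ∑ x ∈ S, strProb θ x

/-- `θ` has a unique maximizer and a unique minimizer. -/
def UniqueExtremizers [Fintype X] (θ : X → ℝ) : Prop :=
  (∃! x : X, ∀ y, θ y ≤ θ x) ∧ (∃! x : X, ∀ y, θ x ≤ θ y)

/-- Tilted weakly typical set of order `α`. -/
noncomputable def typicalSetA [Fintype X] (θ : X → ℝ) (α : ℝ) (n : ℕ) (ε : ℝ) :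
    Finset (Fin n → X) :=
  Finset.univ.filter (fun x =>
    Real.exp (-(n : ℝ) * crossEntropy (tilt θ α) θ - n * ε) < strProb θ x ∧
    strProb θ x < Real.exp (-(n : ℝ) * crossEntropy (tilt θ α) θ + n * ε))

/-- The set `D^n_{θ,α,ε}`. -/
noncomputable def setD [Fintype X] (θ : X → ℝ) (α : ℝ) (n : ℕ) (ε : ℝ) :
    Finset (Fin n → X) :=
  Finset.univ.filter (fun x =>
    strProb (tilt θ α) x > Real.exp (-(n : ℝ) * shannonEntropy (tilt θ α) - n * |α| * ε))

/-- The set `E^n_{θ,α,ε}`. -/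
noncomputable def setE [Fintype X] (θ : X → ℝ) (α : ℝ) (n : ℕ) (ε : ℝ) :
    Finset (Fin n → X) :=
  Finset.univ.filter (fun x =>
    strProb (tilt θ α) x < Real.exp (-(n : ℝ) * shannonEntropy (tilt θ α) + n * |α| * ε))

/-- A guesswork function for `θ` on `n`-strings: a bijection onto `{1,…,|X|^n}`
that orders strings from most likely to least likely. -/
def IsGuesswork [Fintype X] (θ : X → ℝ) {n : ℕ} (G : (Fin n → X) → ℕ) : Prop :=
  Function.Injective G ∧
  (∀ x, G x ∈ Finset.Icc 1 (Fintype.card X ^ n)) ∧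
  (∀ m ∈ Finset.Icc 1 (Fintype.card X ^ n), ∃ x, G x = m) ∧
  (∀ x y, strProb θ x > strProb θ y → G x < G y)

/-! The tilt is an exponential family in `α` with sufficient statistic `ℓ = log (1/θ)`: writing
`H(T(θ,α)‖θ) = N(α) / Z(α)` with `Z(α) = ∑ θ^α` and `N(α) = ∑ θ^α ℓ`, we have `Z' = -N` and
`N' = -∑ θ^α ℓ²`, so the quotient rule gives `-(E[ℓ²] - E[ℓ]²)` under the tilt, which is minus
the cross varentropy. -/

open Finset

section Tilt

variable [Fintype X]

lemma sum_mul_sub_sum_mul_sq {ρ : X → ℝ} (hρ : ∑ x, ρ x = 1) (f : X → ℝ) :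
    ∑ x, ρ x * (f x - ∑ y, ρ y * f y) ^ 2 = ∑ x, ρ x * f x ^ 2 - (∑ x, ρ x * f x) ^ 2 := by
  set E := ∑ y, ρ y * f y
  have hcross : ∀ x, ρ x * (2 * f x * E) = 2 * E * (ρ x * f x) := fun x => by ring
  simp only [sub_sq, mul_add, mul_sub, sum_add_distrib, sum_sub_distrib, ← sum_mul, hρ, hcross,
    ← mul_sum]
  ring

lemma crossVarentropy_eq_sub_sq {ρ : X → ℝ} (hρ : ∑ x, ρ x = 1) (θ : X → ℝ) :
    crossVarentropy ρ θ = ∑ x, ρ x * log (1 / θ x) ^ 2 - crossEntropy ρ θ ^ 2 :=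
  sum_mul_sub_sum_mul_sq hρ _

lemma sum_tilt_mul (θ : X → ℝ) (α : ℝ) (f : X → ℝ) :
    ∑ x, tilt θ α x * f x = (∑ x, θ x ^ α * f x) / ∑ x, θ x ^ α := by
  simp only [tilt, div_mul_eq_mul_div, sum_div]

variable {θ : X → ℝ} (hθ : ∀ x, 0 < θ x)
include hθ

lemma sum_rpow_pos [Nonempty X] (α : ℝ) : 0 < ∑ x, θ x ^ α :=
  sum_pos (fun x _ => rpow_pos_of_pos (hθ x) α) univ_nonempty

lemma sum_tilt_eq_one [Nonempty X] (α : ℝ) : ∑ x, tilt θ α x = 1 := by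
  simpa using (sum_tilt_mul θ α 1).trans (by simpa using div_self (sum_rpow_pos hθ α).ne')

lemma hasDerivAt_sum_rpow_mul (f : X → ℝ) (α₀ : ℝ) :
    HasDerivAt (fun α => ∑ x, θ x ^ α * f x) (∑ x, θ x ^ α₀ * log (θ x) * f x) α₀ :=
  HasDerivAt.fun_sum fun x _ =>
    (hasStrictDerivAt_const_rpow (hθ x) α₀).hasDerivAt.mul_const (f x)

end Tilt

theorem hasDerivAt_crossEntropy_tilt [Fintype X] [Nonempty X] (θ : X → ℝ)
    (hθ : IsCatDist θ) (α₀ : ℝ) :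
    HasDerivAt (fun α : ℝ => crossEntropy (tilt θ α) θ)
      (-(crossVarentropy (tilt θ α₀) θ)) α₀ := by
  obtain ⟨hpos, -⟩ := hθ
  have hZ₀ := (sum_rpow_pos hpos α₀).ne'
  have hZ := hasDerivAt_sum_rpow_mul hpos 1 α₀
  have hN := hasDerivAt_sum_rpow_mul hpos (fun x => log (1 / θ x)) α₀
  simp only [Pi.one_apply, mul_one] at hZ
  rw [crossVarentropy_eq_sub_sq (sum_tilt_eq_one hpos α₀)]
  simp only [crossEntropy, sum_tilt_mul]
  refine (hN.div hZ hZ₀).congr_deriv ?_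
  simp only [one_div, log_inv, mul_neg, neg_mul, neg_sq, sum_neg_distrib]
  field_simp
  ring
end

section
/- Let X be a finite set with |X| ≥ 2 and let θ be a categorical distribution on X with unique extremizers. Fix α ∈ ℝ, and set t := H(T(θ,α)||θ) and Dα := D(T(θ,α)||θ). Then the normalized information (1/n)·log(1/θⁿ(Xⁿ)) satisfies the large deviation principle with rate Dα at the point t, in the following sense: for every δ > 0 there exists ε₀ > 0 such that for every ε with 0 < ε ≤ ε₀ there exists N such that for all n ≥ N, | −(1/n)·log P_θ({ xⁿ ∈ Xⁿ : |(1/n)·log(1/θⁿ(xⁿ)) − t| < ε }) − Dα | < δ. -/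
open Real BigOperators
open scoped Classical

variable {X : Type*}

/-!
Let `ρ = T(θ,α)`, `t = H(ρ‖θ)`, `D = D(ρ‖θ)`. Since `log ρ = α log θ - log ∑ θ^α`,
`θⁿ(x) = ρⁿ(x) · exp (-n D - (1 - α) (log (1/θⁿ(x)) - n t))`,
so on the set of strings whose empirical information is within `ε` of `t` the two product
measures differ by a factor `exp (-n D ± n |1 - α| ε)`. Under `ρⁿ` the information is a sum
of `n` i.i.d. variables of mean `t`, so by Chebyshev that set has `ρⁿ`-probability at least
`1/2` for large `n`. Hence `-(1/n) log P_θ` lies within `|1 - α| ε + (log 2)/n` of `D`.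
-/
open Finset Filter Topology

section StrProb

variable {θ : X → ℝ} {n : ℕ}

lemma strProb_pos (hθ : ∀ y, 0 < θ y) (x : Fin n → X) : 0 < strProb θ x :=
  prod_pos fun i _ => hθ (x i)

lemma strProb_cons (θ : X → ℝ) (y : X) (x : Fin n → X) :
    strProb θ (Fin.cons y x : Fin (n + 1) → X) = θ y * strProb θ x :=
  Fin.prod_univ_succ _

lemma log_strProb (hθ : ∀ y, 0 < θ y) (x : Fin n → X) :
    log (strProb θ x) = ∑ i, log (θ (x i)) :=
  log_prod fun i _ => (hθ (x i)).ne'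

lemma log_one_div_strProb (hθ : ∀ y, 0 < θ y) (x : Fin n → X) :
    log (1 / strProb θ x) = ∑ i, log (1 / θ (x i)) := by
  simp only [one_div, log_inv, log_strProb hθ, sum_neg_distrib]

variable [Fintype X]

lemma sum_strProb (θ : X → ℝ) (n : ℕ) : ∑ x : Fin n → X, strProb θ x = (∑ y, θ y) ^ n :=
  (Fintype.sum_pow θ n).symm

lemma setProb_le_one (h0 : ∀ y, 0 ≤ θ y) (h1 : ∑ y, θ y = 1) (S : Finset (Fin n → X)) :
    setProb θ S ≤ 1 :=
  calc setProb θ S ≤ ∑ x, strProb θ x :=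
        sum_le_sum_of_subset_of_nonneg (subset_univ S) fun x _ _ =>
          prod_nonneg fun i _ => h0 (x i)
    _ = 1 := by rw [sum_strProb, h1, one_pow]

lemma sum_pi_fin_succ {M : Type*} [AddCommMonoid M] (F : (Fin (n + 1) → X) → M) :
    ∑ x, F x = ∑ y, ∑ x : Fin n → X, F (Fin.cons y x) := by
  rw [← (Fin.consEquiv fun _ => X).sum_comp, Fintype.sum_prod_type]
  rfl

lemma sum_strProb_mul_sum_sq (h1 : ∑ y, θ y = 1) {g : X → ℝ} (hg : ∑ y, θ y * g y = 0)
    (n : ℕ) :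
    ∑ x : Fin n → X, strProb θ x * (∑ i, g (x i)) ^ 2 = n * ∑ y, θ y * g y ^ 2 := by
  induction n with
  | zero => simp
  | succ n ih =>
    have expand : ∀ y (x : Fin n → X),
        strProb θ (Fin.cons y x : Fin (n + 1) → X)
            * (∑ i, g ((Fin.cons y x : Fin (n + 1) → X) i)) ^ 2
          = θ y * g y ^ 2 * strProb θ x + 2 * (θ y * g y) * (strProb θ x * ∑ i, g (x i))
            + θ y * (strProb θ x * (∑ i, g (x i)) ^ 2) := by
      intro y x
      rw [strProb_cons, Fin.sum_univ_succ]
      simp only [Fin.cons_zero, Fin.cons_succ]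
      ring
    simp only [sum_pi_fin_succ, expand, sum_add_distrib, ← mul_sum, ← sum_mul, sum_strProb, h1,
      hg, ih]
    push_cast
    ring

end StrProb

lemma sq_mul_sum_filter_le_abs_le_sum_mul_sq {ι : Type*} (s : Finset ι) {w Y : ι → ℝ}
    (hw : ∀ i ∈ s, 0 ≤ w i) {a : ℝ} (ha : 0 ≤ a) :
    a ^ 2 * ∑ i ∈ s with a ≤ |Y i|, w i ≤ ∑ i ∈ s, w i * Y i ^ 2 :=
  calc a ^ 2 * ∑ i ∈ s with a ≤ |Y i|, w i
      = ∑ i ∈ s with a ≤ |Y i|, w i * a ^ 2 := by rw [mul_sum]; simp only [mul_comm]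
    _ ≤ ∑ i ∈ s with a ≤ |Y i|, w i * Y i ^ 2 := by
      refine sum_le_sum fun i hi => ?_
      obtain ⟨his, hai⟩ := mem_filter.mp hi
      exact mul_le_mul_of_nonneg_left ((pow_le_pow_left₀ ha hai 2).trans_eq (sq_abs _))
        (hw i his)
    _ ≤ ∑ i ∈ s, w i * Y i ^ 2 :=
      sum_le_sum_of_subset_of_nonneg (filter_subset _ _) fun i hi _ =>
        mul_nonneg (hw i hi) (sq_nonneg _)

section WeakLaw

variable [Fintype X] {ρ : X → ℝ} {m : ℝ}

lemma setProb_le_abs_sampleMean_sub_le (h0 : ∀ y, 0 ≤ ρ y) (h1 : ∑ y, ρ y = 1) (f : X → ℝ)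
    (hm : ∑ y, ρ y * f y = m) {n : ℕ} (hn : 0 < n) {ε : ℝ} (hε : 0 < ε) :
    setProb ρ (univ.filter fun x : Fin n → X => ε ≤ |(1 / n) * ∑ i, f (x i) - m|)
      ≤ (∑ y, ρ y * (f y - m) ^ 2) / ε ^ 2 / n := by
  have hn' : (0 : ℝ) < n := Nat.cast_pos.mpr hn
  have hcentred : ∑ y, ρ y * (f y - m) = 0 := by
    simp only [mul_sub, sum_sub_distrib, hm, ← sum_mul, h1, one_mul, sub_self]
  have hdev : ∀ x : Fin n → X,
      |(1 / n) * ∑ i, f (x i) - m| = |∑ i, (f (x i) - m)| / n := by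
    intro x
    have hmean : (1 / n) * ∑ i, f (x i) - m = (∑ i, (f (x i) - m)) / n := by
      rw [sum_sub_distrib, sum_const, card_univ, Fintype.card_fin, nsmul_eq_mul]
      field_simp
    rw [hmean, abs_div, abs_of_pos hn']
  have hcheb := sq_mul_sum_filter_le_abs_le_sum_mul_sq (univ : Finset (Fin n → X))
    (w := strProb ρ) (Y := fun x => ∑ i, (f (x i) - m))
    (fun x _ => prod_nonneg fun i _ => h0 (x i)) (mul_pos hn' hε).le
  rw [sum_strProb_mul_sum_sq h1 hcentred] at hcheb
  simp only [setProb, hdev, le_div_iff₀ hn', mul_comm ε]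
  rw [le_div_iff₀ (by positivity)]
  nlinarith [hcheb]

theorem tendsto_setProb_abs_sampleMean_sub_lt (h0 : ∀ y, 0 ≤ ρ y) (h1 : ∑ y, ρ y = 1)
    (f : X → ℝ) (hm : ∑ y, ρ y * f y = m) {ε : ℝ} (hε : 0 < ε) :
    Tendsto (fun n : ℕ =>
      setProb ρ (univ.filter fun x : Fin n → X => |(1 / n) * ∑ i, f (x i) - m| < ε))
      atTop (𝓝 1) := by
  have hcompl : ∀ n : ℕ,
      setProb ρ (univ.filter fun x : Fin n → X => |(1 / n) * ∑ i, f (x i) - m| < ε)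
        = 1 - setProb ρ
          (univ.filter fun x : Fin n → X => ε ≤ |(1 / n) * ∑ i, f (x i) - m|) := by
    intro n
    have := sum_filter_add_sum_filter_not univ
      (fun x : Fin n → X => |(1 / n) * ∑ i, f (x i) - m| < ε) (strProb ρ)
    simp only [not_lt, sum_strProb, h1, one_pow] at this
    simp only [setProb]
    linarith
  have hlower :
      Tendsto (fun n : ℕ => 1 - (∑ y, ρ y * (f y - m) ^ 2) / ε ^ 2 / n) atTop (𝓝 1) := by
    simpa using (tendsto_const_div_atTop_nhds_zero_nat (_ : ℝ)).const_sub (1 : ℝ)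
  refine tendsto_of_tendsto_of_tendsto_of_le_of_le' hlower tendsto_const_nhds ?_
    (Eventually.of_forall fun n => setProb_le_one h0 h1 _)
  filter_upwards [eventually_gt_atTop 0] with n hn
  rw [hcompl]
  linarith [setProb_le_abs_sampleMean_sub_le h0 h1 f hm hn hε]

end WeakLaw

section Tilt

variable [Fintype X] {θ : X → ℝ}

lemma IsCatDist.sum_rpow_pos (hθ : IsCatDist θ) (α : ℝ) : 0 < ∑ y, θ y ^ α :=
  sum_pos (fun y _ => rpow_pos_of_pos (hθ.1 y) α)
    (nonempty_of_sum_ne_zero (hθ.2 ▸ one_ne_zero))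

lemma IsCatDist.tilt (hθ : IsCatDist θ) (α : ℝ) : IsCatDist (tilt θ α) := by
  refine ⟨fun y => div_pos (rpow_pos_of_pos (hθ.1 y) α) (hθ.sum_rpow_pos α), ?_⟩
  simp only [_root_.tilt, ← sum_div, div_self (hθ.sum_rpow_pos α).ne']

lemma log_tilt (hθ : IsCatDist θ) (α : ℝ) (y : X) :
    log (tilt θ α y) = α * log (θ y) - log (∑ z, θ z ^ α) := by
  rw [tilt, log_div (rpow_pos_of_pos (hθ.1 y) α).ne' (hθ.sum_rpow_pos α).ne',
    log_rpow (hθ.1 y)]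

lemma relEntropy_tilt (hθ : IsCatDist θ) (α : ℝ) :
    relEntropy (tilt θ α) θ = (1 - α) * crossEntropy (tilt θ α) θ - log (∑ z, θ z ^ α) := by
  have hterm : ∀ y, tilt θ α y * log (tilt θ α y / θ y)
      = (1 - α) * (tilt θ α y * log (1 / θ y)) - log (∑ z, θ z ^ α) * tilt θ α y := by
    intro y
    rw [log_div ((hθ.tilt α).1 y).ne' (hθ.1 y).ne', log_tilt hθ, one_div, log_inv]
    ring
  rw [relEntropy, crossEntropy, mul_sum, sum_congr rfl fun y _ => hterm y, sum_sub_distrib,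
    ← mul_sum, ← mul_sum, (hθ.tilt α).2, mul_one]

lemma strProb_eq_strProb_tilt_mul_exp (hθ : IsCatDist θ) (α : ℝ) {n : ℕ} (x : Fin n → X) :
    strProb θ x = strProb (tilt θ α) x * exp (-(n * relEntropy (tilt θ α) θ)
      - (1 - α) * (log (1 / strProb θ x) - n * crossEntropy (tilt θ α) θ)) := by
  have hlog_tilt : log (strProb (tilt θ α) x)
      = α * log (strProb θ x) - n * log (∑ z, θ z ^ α) := by
    simp only [log_strProb (hθ.tilt α).1, log_strProb hθ.1, log_tilt hθ, sum_sub_distrib,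
      ← mul_sum, sum_const, card_univ, Fintype.card_fin, nsmul_eq_mul]
  conv_lhs => rw [← exp_log (strProb_pos hθ.1 x)]
  rw [← exp_log (strProb_pos (hθ.tilt α).1 x), ← exp_add, hlog_tilt, relEntropy_tilt hθ,
    one_div, log_inv]
  congr 1
  ring

end Tilt

lemma abs_neg_one_div_mul_log_sub_le {P Q D η n : ℝ} (hn : 0 < n) (hQ : 1 / 2 ≤ Q)
    (hQ1 : Q ≤ 1) (hlo : Q * exp (-(n * (D + η))) ≤ P) (hhi : P ≤ Q * exp (-(n * (D - η)))) :
    |-(1 / n) * log P - D| ≤ η + log 2 / n := by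
  have hQ0 : Q ≠ 0 := by positivity
  have hlogQ : -log 2 ≤ log Q := by
    rw [← log_inv, ← one_div]
    exact log_le_log (by norm_num) hQ
  have hlogQ1 : log Q ≤ 0 := log_nonpos (by linarith) hQ1
  have hlogP_lo : log Q - n * (D + η) ≤ log P := by
    simpa [log_mul hQ0 (exp_pos _).ne', sub_eq_add_neg] using log_le_log (by positivity) hlo
  have hlogP_hi : log P ≤ log Q - n * (D - η) := by
    simpa [log_mul hQ0 (exp_pos _).ne', sub_eq_add_neg] using
      log_le_log (lt_of_lt_of_le (by positivity) hlo) hhi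
  rw [show -(1 / n) * log P - D = (-log P - n * D) / n by field_simp,
    show η + log 2 / n = (n * η + log 2) / n by field_simp, abs_div, abs_of_pos hn,
    div_le_div_iff_of_pos_right hn, abs_le]
  constructor <;> nlinarith

section TypicalSet

variable [Fintype X]

noncomputable def infoTypicalSet (θ : X → ℝ) (t : ℝ) (n : ℕ) (ε : ℝ) : Finset (Fin n → X) :=
  univ.filter fun x => |(1 / n) * log (1 / strProb θ x) - t| < ε

lemma abs_log_setProb_infoTypicalSet_sub_relEntropy_le {θ : X → ℝ} (hθ : IsCatDist θ) (α : ℝ)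
    {n : ℕ} (hn : 0 < n) {ε : ℝ}
    (hS : 1 / 2 ≤ setProb (tilt θ α) (infoTypicalSet θ (crossEntropy (tilt θ α) θ) n ε)) :
    |-(1 / n) * log (setProb θ (infoTypicalSet θ (crossEntropy (tilt θ α) θ) n ε))
      - relEntropy (tilt θ α) θ| ≤ |1 - α| * ε + log 2 / n := by
  set t := crossEntropy (tilt θ α) θ
  set D := relEntropy (tilt θ α) θ
  set S := infoTypicalSet θ t n ε
  have hn' : (0 : ℝ) < n := Nat.cast_pos.mpr hn
  have hexponent : ∀ x ∈ S,
      |(1 - α) * (log (1 / strProb θ x) - n * t)| ≤ n * (|1 - α| * ε) := by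
    intro x hx
    have hx : |(1 / n) * log (1 / strProb θ x) - t| < ε := (mem_filter.mp hx).2
    have hscale :
        log (1 / strProb θ x) - n * t = n * ((1 / n) * log (1 / strProb θ x) - t) := by
      field_simp
    rw [hscale, abs_mul, abs_mul, abs_of_pos hn']
    calc |1 - α| * (n * |(1 / n) * log (1 / strProb θ x) - t|)
        = n * (|1 - α| * |(1 / n) * log (1 / strProb θ x) - t|) := by ring
      _ ≤ n * (|1 - α| * ε) := by gcongr
  have hchange : setProb θ S = ∑ x ∈ S, strProb (tilt θ α) x *
      exp (-(n * D) - (1 - α) * (log (1 / strProb θ x) - n * t)) :=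
    sum_congr rfl fun x _ => strProb_eq_strProb_tilt_mul_exp hθ α x
  have hS1 := setProb_le_one (fun y => ((hθ.tilt α).1 y).le) (hθ.tilt α).2 S
  refine abs_neg_one_div_mul_log_sub_le hn' hS hS1 ?_ ?_ <;> rw [hchange, setProb, sum_mul] <;>
    refine sum_le_sum fun x hx =>
      mul_le_mul_of_nonneg_left ?_ (strProb_pos (hθ.tilt α).1 x).le <;>
    rw [exp_le_exp] <;> linarith [abs_le.mp (hexponent x hx)]

end TypicalSet

theorem information_ldp_general [Fintype X]
    (θ : X → ℝ) (hθ : IsCatDist θ) (α : ℝ) :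
    ∀ δ : ℝ, 0 < δ → ∃ ε₀ : ℝ, 0 < ε₀ ∧ ∀ ε : ℝ, 0 < ε → ε ≤ ε₀ →
      ∃ N : ℕ, ∀ n : ℕ, N ≤ n →
        |(-(1 / (n : ℝ)) * Real.log (setProb θ
            (Finset.univ.filter (fun x : Fin n → X =>
              |(1 / (n : ℝ)) * Real.log (1 / strProb θ x) -
                crossEntropy (tilt θ α) θ| < ε)))) -
          relEntropy (tilt θ α) θ| < δ := by
  intro δ hδ
  refine ⟨δ / (2 * (|1 - α| + 1)), by positivity, fun ε hε hεle => ?_⟩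
  have hρ := hθ.tilt α
  have hweak_law := tendsto_setProb_abs_sampleMean_sub_lt (m := crossEntropy (tilt θ α) θ)
    (fun y => (hρ.1 y).le) hρ.2 (fun y => log (1 / θ y)) rfl hε
  have htypical : ∀ᶠ n : ℕ in atTop,
      1 / 2 < setProb (tilt θ α) (infoTypicalSet θ (crossEntropy (tilt θ α) θ) n ε) := by
    simpa only [infoTypicalSet, log_one_div_strProb hθ.1] using
      hweak_law.eventually_const_lt (by norm_num : (1 : ℝ) / 2 < 1)
  have hlog2 : ∀ᶠ n : ℕ in atTop, log 2 / n < δ / 2 :=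
    (tendsto_const_div_atTop_nhds_zero_nat _).eventually_lt_const (half_pos hδ)
  obtain ⟨N, hN⟩ := eventually_atTop.mp (htypical.and (hlog2.and (eventually_gt_atTop 0)))
  refine ⟨N, fun n hn => ?_⟩
  obtain ⟨hS, hlog2n, hn0⟩ := hN n hn
  have hεδ : |1 - α| * ε ≤ δ / 2 :=
    calc |1 - α| * ε ≤ (|1 - α| + 1) * (δ / (2 * (|1 - α| + 1))) := by gcongr; linarith
      _ = δ / 2 := by field_simp
  exact (abs_log_setProb_infoTypicalSet_sub_relEntropy_le hθ α hn0 hS.le).trans_lt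
    (by linarith)

theorem information_ldp [Fintype X] (hcard : 2 ≤ Fintype.card X)
    (θ : X → ℝ) (hθ : IsCatDist θ) (hext : UniqueExtremizers θ) (α : ℝ) :
    ∀ δ : ℝ, 0 < δ → ∃ ε₀ : ℝ, 0 < ε₀ ∧ ∀ ε : ℝ, 0 < ε → ε ≤ ε₀ →
      ∃ N : ℕ, ∀ n : ℕ, N ≤ n →
        |(-(1 / (n : ℝ)) * Real.log (setProb θ
            (Finset.univ.filter (fun x : Fin n → X =>
              |(1 / (n : ℝ)) * Real.log (1 / strProb θ x) -
                crossEntropy (tilt θ α) θ| < ε)))) -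
          relEntropy (tilt θ α) θ| < δ :=
  information_ldp_general θ hθ α
end
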